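/- arXiv:1009.1022 — 2 statements merged into one kernel-verified Lean document; each statement's English description precedes it below -/
import Mathlib

section
/- Let (X, 𝓘) be a Polish ideal space with 𝓘 c.c.c. Assume a family 𝓕 ⊆ 𝓘 satisfies: (1) 𝓕 is point-finite (for every x ∈ X, the set {F ∈ 𝓕 : x ∈ F} is finite); (2) for every 𝓘-positive Borel set B with B ⊆ [⋃𝓕]_𝓘, the family {F ∈ 𝓕 : F ∩ B ≠ ∅} has cardinality 2^ℵ₀. Then there exists a subfamily 𝓕' ⊆ 𝓕 such that ⋃𝓕' is completely 𝓘-nonmeasurable in [⋃𝓕]_𝓘. -/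
/-!
Enumerate the `𝓘`-positive Borel subsets of `E` along the initial well-order of type `𝔠`, each of
them `𝔠` times, and pick by transfinite recursion pairwise distinct members of `𝓕` meeting them:
each positive Borel set meets `𝔠` members of `𝓕`, and fewer than `𝔠` have been used before.
Splitting the indices into `𝔠` blocks, each of which enumerates every positive Borel set, gives
`𝔠` pairwise disjoint subfamilies whose unions meet every positive Borel subset of `E`. If each
of these unions contained a positive Borel set, those sets would form an uncountable point-finite
family of positive Borel sets, because `𝓕` is point-finite.

In a c.c.c. σ-ideal such a family `(B i)` is countable. Below every positive Borel set `p` there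
is a positive Borel set meeting only countably many `B i` positively: otherwise, by c.c.c., for
every countable `T` countably many `B i` with `i ∉ T` cover `p` up to `𝓘`, and iterating this,
almost every point of `p` lies in `n` of the sets `B i` for every `n`. Covering `X` up to `𝓘` by
countably many such sets shows that only countably many indices occur.
-/

open Set Cardinal Function

universe u

variable {X : Type*}

structure IsSigmaIdeal (𝓘 : Set (Set X)) : Prop where
  mono : ∀ A B : Set X, A ⊆ B → B ∈ 𝓘 → A ∈ 𝓘
  iUnion_mem : ∀ f : ℕ → Set X, (∀ n, f n ∈ 𝓘) → ⋃ n, f n ∈ 𝓘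
  empty_mem : ∅ ∈ 𝓘

def IsCCC [MeasurableSpace X] (𝓘 : Set (Set X)) : Prop :=
  ∀ 𝒟 : Set (Set X), (∀ D ∈ 𝒟, MeasurableSet D ∧ D ∉ 𝓘) → 𝒟.PairwiseDisjoint id → 𝒟.Countable

namespace IsSigmaIdeal

variable {𝓘 : Set (Set X)}

theorem nonempty_of_notMem (h𝓘 : IsSigmaIdeal 𝓘) {A : Set X} (hA : A ∉ 𝓘) : A.Nonempty :=
  nonempty_iff_ne_empty.2 fun h => hA (h ▸ h𝓘.empty_mem)

theorem sUnion_mem (h𝓘 : IsSigmaIdeal 𝓘) {S : Set (Set X)} (hS : S.Countable)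
    (hmem : ∀ s ∈ S, s ∈ 𝓘) : ⋃₀ S ∈ 𝓘 := by
  rcases S.eq_empty_or_nonempty with rfl | hne
  · simpa using h𝓘.empty_mem
  · obtain ⟨f, rfl⟩ := hS.exists_eq_range hne
    rw [sUnion_range]
    exact h𝓘.iUnion_mem f fun n => hmem _ (mem_range_self n)

theorem union_mem (h𝓘 : IsSigmaIdeal 𝓘) {A B : Set X} (hA : A ∈ 𝓘) (hB : B ∈ 𝓘) :
    A ∪ B ∈ 𝓘 := by
  rw [← sUnion_pair]
  exact h𝓘.sUnion_mem ((countable_singleton B).insert A) (by simp [hA, hB])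

theorem exists_inter_notMem_of_diff_sUnion_mem (h𝓘 : IsSigmaIdeal 𝓘) {A B : Set X}
    {𝒟 : Set (Set X)} (h𝒟 : 𝒟.Countable) (hcover : A \ ⋃₀ 𝒟 ∈ 𝓘) (hBA : B ⊆ A) (hB : B ∉ 𝓘) :
    ∃ d ∈ 𝒟, d ∩ B ∉ 𝓘 := by
  by_contra! h
  refine hB (h𝓘.mono _ _ ?_ (h𝓘.union_mem (h𝓘.sUnion_mem (h𝒟.image (· ∩ B)) ?_) hcover))
  · intro x hx
    by_cases hx𝒟 : x ∈ ⋃₀ 𝒟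
    · obtain ⟨d, hd, hxd⟩ := hx𝒟
      exact Or.inl ⟨d ∩ B, mem_image_of_mem _ hd, hxd, hx⟩
    · exact Or.inr ⟨hBA hx, hx𝒟⟩
  · rintro _ ⟨d, hd, rfl⟩
    exact h d hd

variable [MeasurableSpace X]

/-- Take a maximal disjoint family of positive Borel sets with property `P`: it is countable by
c.c.c., and covers `A` up to `𝓘` by maximality. -/
theorem exists_countable_cover (h𝓘 : IsSigmaIdeal 𝓘) (hccc : IsCCC 𝓘) (P : Set X → Prop)
    {A : Set X} (hA : MeasurableSet A)
    (hP : ∀ r ⊆ A, MeasurableSet r → r ∉ 𝓘 → ∃ d ⊆ r, MeasurableSet d ∧ d ∉ 𝓘 ∧ P d) :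
    ∃ 𝒟 : Set (Set X), 𝒟.Countable ∧ (∀ d ∈ 𝒟, MeasurableSet d ∧ P d) ∧ A \ ⋃₀ 𝒟 ∈ 𝓘 := by
  let Good : Set (Set (Set X)) :=
    {𝒟 | (∀ d ∈ 𝒟, MeasurableSet d ∧ d ∉ 𝓘 ∧ P d) ∧ 𝒟.PairwiseDisjoint id}
  obtain ⟨𝒟, h𝒟⟩ : ∃ 𝒟, Maximal (· ∈ Good) 𝒟 := by
    refine zorn_subset Good fun c hc hchain =>
      ⟨⋃₀ c, ⟨?_, (hchain.pairwiseDisjoint_sUnion id).2 fun s hs => (hc hs).2⟩,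
        fun s hs => subset_sUnion_of_mem hs⟩
    rintro d ⟨t, htc, hdt⟩
    exact (hc htc).1 d hdt
  have hcount : 𝒟.Countable :=
    hccc 𝒟 (fun d hd => ⟨(h𝒟.1.1 d hd).1, (h𝒟.1.1 d hd).2.1⟩) h𝒟.1.2
  refine ⟨𝒟, hcount, fun d hd => ⟨(h𝒟.1.1 d hd).1, (h𝒟.1.1 d hd).2.2⟩, ?_⟩
  by_contra hpos
  obtain ⟨d, hdr, hd, hdpos, hPd⟩ := hP (A \ ⋃₀ 𝒟) sdiff_subset
    (hA.diff (.sUnion hcount fun d hd => (h𝒟.1.1 d hd).1)) hpos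
  have hdisj : ∀ d' ∈ 𝒟, d ≠ d' → Disjoint (id d) (id d') := fun d' hd' _ =>
    disjoint_left.2 fun x hx hx' => (hdr hx).2 ⟨d', hd', hx'⟩
  have hd𝒟 : d ∈ 𝒟 := h𝒟.mem_of_prop_insert
    ⟨by rintro d' (rfl | hd'); exacts [⟨hd, hdpos, hPd⟩, h𝒟.1.1 d' hd'], h𝒟.1.2.insert hdisj⟩
  obtain ⟨x, hx⟩ := h𝓘.nonempty_of_notMem hdpos
  exact (hdr hx).2 ⟨d, hd𝒟, hx⟩

section PointFinite

variable {ι : Type*} (B : ι → Set X)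

theorem exists_countable_cover_disjoint (h𝓘 : IsSigmaIdeal 𝓘) (hccc : IsCCC 𝓘)
    (hmeas : ∀ i, MeasurableSet (B i)) {p : Set X} (hp : MeasurableSet p)
    (htrace : ∀ d ⊆ p, MeasurableSet d → d ∉ 𝓘 → ¬ {i | d ∩ B i ∉ 𝓘}.Countable)
    {T : Set ι} (hT : T.Countable) :
    ∃ U : Set ι, U.Countable ∧ Disjoint U T ∧ p \ ⋃ i ∈ U, B i ∈ 𝓘 := by
  obtain ⟨𝒟, h𝒟c, h𝒟, hcover⟩ := h𝓘.exists_countable_cover hccc (fun d => ∃ i ∉ T, d ⊆ B i) hp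
    fun r hrp hr hrpos => by
      obtain ⟨i, hi, hiT⟩ : ∃ i, r ∩ B i ∉ 𝓘 ∧ i ∉ T := by
        by_contra! h
        exact htrace r hrp hr hrpos (hT.mono h)
      exact ⟨r ∩ B i, inter_subset_left, hr.inter (hmeas i), hi, i, hiT, inter_subset_right⟩
  have := h𝒟c.to_subtype
  choose f hfT hf using fun d : 𝒟 => (h𝒟 d d.2).2
  refine ⟨range f, countable_range f, disjoint_left.2 ?_, h𝓘.mono _ _ ?_ hcover⟩
  · rintro _ ⟨d, rfl⟩
    exact hfT d
  · exact sdiff_subset_sdiff_right fun x ⟨d, hd, hxd⟩ =>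
      mem_biUnion (mem_range_self ⟨d, hd⟩) (hf ⟨d, hd⟩ hxd)

theorem exists_subset_countable_trace (h𝓘 : IsSigmaIdeal 𝓘) (hccc : IsCCC 𝓘)
    (hmeas : ∀ i, MeasurableSet (B i)) (hpf : ∀ x, {i | x ∈ B i}.Finite) {p : Set X}
    (hp : MeasurableSet p) (hpos : p ∉ 𝓘) :
    ∃ d ⊆ p, MeasurableSet d ∧ d ∉ 𝓘 ∧ {i | d ∩ B i ∉ 𝓘}.Countable := by
  by_contra! htrace
  let L : ℕ → Set ι → Set X := fun n T => {x | (n : ℕ∞) ≤ (T ∩ {i | x ∈ B i}).encard}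
  have hL : ∀ n, ∃ T : Set ι, T.Countable ∧ p \ L n T ∈ 𝓘 := by
    intro n
    induction n with
    | zero => exact ⟨∅, countable_empty, by simp [L, h𝓘.empty_mem]⟩
    | succ n ih =>
      obtain ⟨T, hT, hTL⟩ := ih
      obtain ⟨U, hU, hUT, hUcover⟩ :=
        h𝓘.exists_countable_cover_disjoint B hccc hmeas hp htrace hT
      refine ⟨U ∪ T, hU.union hT, h𝓘.mono _ _ ?_ (h𝓘.union_mem hUcover hTL)⟩
      rintro x ⟨hxp, hxL⟩
      rw [mem_union, mem_sdiff, mem_sdiff, and_iff_right hxp, and_iff_right hxp, ← not_and_or]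
      rintro ⟨hxU, hxT⟩
      obtain ⟨i, hiU, hxi⟩ := mem_iUnion₂.1 hxU
      apply hxL
      calc ((n + 1 : ℕ) : ℕ∞) ≤ (T ∩ {i | x ∈ B i}).encard + 1 := by push_cast; gcongr; exact hxT
        _ = (insert i (T ∩ {i | x ∈ B i})).encard :=
          (encard_insert_of_notMem fun h => disjoint_left.1 hUT hiU h.1).symm
        _ ≤ ((U ∪ T) ∩ {i | x ∈ B i}).encard :=
          encard_le_encard (insert_subset ⟨Or.inl hiU, hxi⟩ (inter_subset_inter_left _
            subset_union_right))
  choose T hT hTL using hL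
  obtain ⟨x, hxp, hx⟩ : (p \ ⋃ n, p \ L n (T n)).Nonempty :=
    sdiff_nonempty.2 fun hsub => hpos (h𝓘.mono _ _ hsub (h𝓘.iUnion_mem _ hTL))
  have hxL : ∀ n : ℕ, (n : ℕ∞) ≤ {i | x ∈ B i}.encard := fun n =>
    (not_not.1 fun h => hx (mem_iUnion.2 ⟨n, hxp, h⟩)).trans (encard_le_encard inter_subset_right)
  exact (hpf x).encard_lt_top.ne (ENat.eq_top_iff_forall_ge.2 hxL)

theorem countable_of_pointFinite (h𝓘 : IsSigmaIdeal 𝓘) (hccc : IsCCC 𝓘)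
    (hmeas : ∀ i, MeasurableSet (B i)) (hpos : ∀ i, B i ∉ 𝓘) (hpf : ∀ x, {i | x ∈ B i}.Finite) :
    Countable ι := by
  obtain ⟨𝒟, h𝒟c, h𝒟, hcover⟩ := h𝓘.exists_countable_cover hccc
    (fun d => {i | d ∩ B i ∉ 𝓘}.Countable) MeasurableSet.univ
    fun _ _ hr hrpos => h𝓘.exists_subset_countable_trace B hccc hmeas hpf hr hrpos
  refine countable_univ_iff.1 ((h𝒟c.biUnion fun d hd => (h𝒟 d hd).2).mono fun i _ => ?_)
  obtain ⟨d, hd, hdi⟩ :=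
    h𝓘.exists_inter_notMem_of_diff_sUnion_mem h𝒟c hcover (subset_univ _) (hpos i)
  exact mem_biUnion hd hdi

end PointFinite

end IsSigmaIdeal

theorem finite_setOf_mem_of_subset_sUnion {ι : Type*} {𝓕 : Set (Set X)}
    (hpf : ∀ x, {F | F ∈ 𝓕 ∧ x ∈ F}.Finite) {G : ι → Set (Set X)} (hG𝓕 : ∀ ξ, G ξ ⊆ 𝓕)
    (hG : Pairwise (Disjoint on G)) {W : ι → Set X} (hW : ∀ ξ, W ξ ⊆ ⋃₀ G ξ) (x : X) :
    {ξ | x ∈ W ξ}.Finite := by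
  refine ((hpf x).biUnion fun F _ => (?_ : {ξ | F ∈ G ξ}.Subsingleton).finite).subset
    fun ξ hξ => ?_
  · intro ξ hξ η hη
    by_contra hne
    exact disjoint_left.1 (hG hne) hξ hη
  · obtain ⟨F, hF, hxF⟩ := hW ξ hξ
    exact mem_biUnion ⟨hG𝓕 ξ hF, hxF⟩ hF

theorem IsSigmaIdeal.exists_forall_not_subset_sUnion [MeasurableSpace X] {𝓘 : Set (Set X)}
    (h𝓘 : IsSigmaIdeal 𝓘) (hccc : IsCCC 𝓘) {𝓕 : Set (Set X)}
    (hpf : ∀ x, {F | F ∈ 𝓕 ∧ x ∈ F}.Finite) {ι : Type*} [Uncountable ι] (G : ι → Set (Set X))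
    (hG𝓕 : ∀ ξ, G ξ ⊆ 𝓕) (hG : Pairwise (Disjoint on G)) :
    ∃ ξ, ∀ B, MeasurableSet B → B ∉ 𝓘 → ¬ B ⊆ ⋃₀ G ξ := by
  by_contra! h
  choose W hWm hWpos hW using h
  exact not_countable_iff.2 ‹_›
    (h𝓘.countable_of_pointFinite W hccc hWm hWpos (finite_setOf_mem_of_subset_sUnion hpf hG𝓕 hG hW))

theorem exists_injective_forall_mem {ι α : Type u} [LinearOrder ι] [WellFoundedLT ι]
    (S : ι → Set α) (hS : ∀ j, #(Iio j) < #(S j)) : ∃ v : ι → α, Injective v ∧ ∀ j, v j ∈ S j := by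
  have hstep : ∀ j (prev : ∀ k < j, α), ∃ a ∈ S j, ∀ k (hk : k < j), a ≠ prev k hk := by
    intro j prev
    by_contra! h
    have hsub : S j ⊆ range fun k : Iio j => prev k k.2 := fun a ha =>
      let ⟨k, hk, hak⟩ := h a ha
      ⟨⟨k, hk⟩, hak.symm⟩
    exact (hS j).not_ge ((mk_le_mk_of_subset hsub).trans mk_range_le)
  choose f hfS hf using hstep
  let v : ι → α := WellFoundedLT.fix f
  have hv : ∀ j, v j = f j fun k _ => v k := WellFoundedLT.fix_eq f
  refine ⟨v, fun a b hab => ?_, fun j => hv j ▸ hfS j _⟩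
  rcases lt_trichotomy a b with h | h | h
  · exact (hf b _ a h (by rw [← hv]; exact hab.symm)).elim
  · exact h
  · exact (hf a _ b h (by rw [← hv]; exact hab)).elim

theorem mk_setOf_measurableSet_le_continuum [MeasurableSpace X]
    [MeasurableSpace.CountablyGenerated X] : #{s : Set X | MeasurableSet s} ≤ 𝔠 := by
  obtain ⟨b, hb, rfl⟩ := MeasurableSpace.CountablyGenerated.isCountablyGenerated (α := X)
  exact MeasurableSpace.cardinal_measurableSet_le_continuum (hb.le_aleph0.trans aleph0_le_continuum)

theorem nonempty_equiv_toType_continuum_prod {α : Type u} [Nonempty α] (hα : #α ≤ 𝔠) :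
    Nonempty ((𝔠 : Cardinal.{u}).ord.ToType ≃ (𝔠 : Cardinal.{u}).ord.ToType × α) := by
  rw [← Cardinal.eq, mk_prod, lift_id, lift_id, mk_ord_toType,
    Cardinal.mul_eq_left aleph0_le_continuum hα (mk_ne_zero α)]

theorem stmt_12_general {X : Type} [TopologicalSpace X] [PolishSpace X] [Uncountable X]
    [MeasurableSpace X] [BorelSpace X]
    (𝓘 : Set (Set X))
    (hDown : ∀ A B : Set X, A ⊆ B → B ∈ 𝓘 → A ∈ 𝓘)
    (hUnion : ∀ f : ℕ → Set X, (∀ n, f n ∈ 𝓘) → (⋃ n, f n) ∈ 𝓘)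
    (hSing : ∀ x : X, ({x} : Set X) ∈ 𝓘)
    (hccc : ∀ 𝒟 : Set (Set X), (∀ D ∈ 𝒟, MeasurableSet D ∧ D ∉ 𝓘) →
      𝒟.PairwiseDisjoint id → 𝒟.Countable)
    (𝓕 : Set (Set X))
    (hpf : ∀ x : X, {F | F ∈ 𝓕 ∧ x ∈ F}.Finite)
    (E : Set X)
    (h2 : ∀ B : Set X, MeasurableSet B → B ∉ 𝓘 → B ⊆ E →
      Cardinal.mk ↥{F | F ∈ 𝓕 ∧ (F ∩ B).Nonempty} = Cardinal.continuum) :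
    ∃ 𝓕' ⊆ 𝓕, ∀ B : Set X, MeasurableSet B → B ∉ 𝓘 → B ⊆ E →
      (⋃₀ 𝓕' ∩ B).Nonempty ∧ (B \ ⋃₀ 𝓕').Nonempty := by
  have h𝓘 : IsSigmaIdeal 𝓘 :=
    ⟨hDown, hUnion, hDown ∅ _ (empty_subset _) (hSing (Classical.arbitrary X))⟩
  let Pos : Set (Set X) := {B | MeasurableSet B ∧ B ∉ 𝓘 ∧ B ⊆ E}
  rcases isEmpty_or_nonempty Pos with hPos | hPos
  · exact ⟨∅, empty_subset _, fun B hB hBpos hBE => (hPos.false ⟨B, hB, hBpos, hBE⟩).elim⟩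
  let J := (𝔠 : Cardinal.{0}).ord.ToType
  have : Uncountable J := aleph0_lt_mk_iff.1 (by rw [mk_ord_toType]; exact aleph0_lt_continuum)
  obtain ⟨e⟩ : Nonempty (J ≃ J × Pos) := nonempty_equiv_toType_continuum_prod
    ((mk_le_mk_of_subset fun B hB => hB.1).trans mk_setOf_measurableSet_le_continuum)
  obtain ⟨u, hu_inj, hu⟩ := exists_injective_forall_mem
    (fun j => {F | F ∈ 𝓕 ∧ (F ∩ (e j).2).Nonempty}) fun j => by
      rw [h2 _ (e j).2.2.1 (e j).2.2.2.1 (e j).2.2.2.2]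
      simpa [J] using mk_Iio_lt j (by simp [J])
  let piece (ξ : J) : Set (Set X) := u '' {j | (e j).1 = ξ}
  have hpiece : ∀ ξ, piece ξ ⊆ 𝓕 := fun ξ => image_subset_iff.2 fun j _ => (hu j).1
  obtain ⟨ξ, hξ⟩ := h𝓘.exists_forall_not_subset_sUnion hccc hpf piece hpiece
    fun ξ η hne => (disjoint_image_iff hu_inj).2
      (disjoint_left.2 fun j h h' => hne (h.symm.trans h'))
  refine ⟨piece ξ, hpiece ξ, fun B hB hBpos hBE => ⟨?_, sdiff_nonempty.2 (hξ B hB hBpos)⟩⟩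
  let j := e.symm (ξ, ⟨B, hB, hBpos, hBE⟩)
  obtain ⟨x, hxu, hxB⟩ := (hu j).2
  exact ⟨x, ⟨u j, ⟨j, by simp [j], rfl⟩, hxu⟩, by simpa [j] using hxB⟩

theorem stmt_12 {X : Type} [TopologicalSpace X] [PolishSpace X] [Uncountable X]
    [MeasurableSpace X] [BorelSpace X]
    (𝓘 : Set (Set X))
    (hDown : ∀ A B : Set X, A ⊆ B → B ∈ 𝓘 → A ∈ 𝓘)
    (hUnion : ∀ f : ℕ → Set X, (∀ n, f n ∈ 𝓘) → (⋃ n, f n) ∈ 𝓘)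
    (hProper : (univ : Set X) ∉ 𝓘)
    (hSing : ∀ x : X, ({x} : Set X) ∈ 𝓘)
    (hBase : ∀ A ∈ 𝓘, ∃ B : Set X, A ⊆ B ∧ MeasurableSet B ∧ B ∈ 𝓘)
    (hccc : ∀ 𝒟 : Set (Set X), (∀ D ∈ 𝒟, MeasurableSet D ∧ D ∉ 𝓘) →
      𝒟.PairwiseDisjoint id → 𝒟.Countable)
    (𝓕 : Set (Set X)) (h𝓕 : 𝓕 ⊆ 𝓘)
    (hpf : ∀ x : X, {F | F ∈ 𝓕 ∧ x ∈ F}.Finite)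
    (E : Set X) (hEmeas : MeasurableSet E) (hEsub : ⋃₀ 𝓕 ⊆ E)
    (hEmin : ∀ C : Set X, MeasurableSet C → ⋃₀ 𝓕 ⊆ C → E \ C ∈ 𝓘)
    (h2 : ∀ B : Set X, MeasurableSet B → B ∉ 𝓘 → B ⊆ E →
      Cardinal.mk ↥{F | F ∈ 𝓕 ∧ (F ∩ B).Nonempty} = Cardinal.continuum) :
    ∃ 𝓕' ⊆ 𝓕, ∀ B : Set X, MeasurableSet B → B ∉ 𝓘 → B ⊆ E →
      (⋃₀ 𝓕' ∩ B).Nonempty ∧ (B \ ⋃₀ 𝓕').Nonempty :=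
  stmt_12_general 𝓘 hDown hUnion hSing hccc 𝓕 hpf E h2
end

section
/- Let (X, 𝓘) be a Polish ideal space with 𝓘 c.c.c. Assume a family 𝓕 ⊆ 𝓘 is point-finite (for every x ∈ X, the set {F ∈ 𝓕 : x ∈ F} is finite) and that for every 𝓘-positive Borel set B with B ⊆ [⋃𝓕]_𝓘, the family {F ∈ 𝓕 : F ∩ B ≠ ∅} has cardinality 2^ℵ₀. Then there exists a subfamily 𝓕₀ ⊆ 𝓕 such that: (1) [⋃𝓕₀]_𝓘 coincides with [⋃𝓕]_𝓘 modulo 𝓘; (2) for every 𝓘-positive Borel set B with B ⊆ ⋃𝓕₀, every subfamily 𝓐 ⊆ 𝓕₀ with B ⊆ ⋃𝓐 has cardinality 2^ℵ₀. -/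
/-!
Call a set small-coverable by `𝓖` if fewer than `𝔠` members of `𝓖` cover it. As `cf 𝔠 > ℵ₀`,
countable unions of small-coverable sets are small-coverable, so by c.c.c. every `𝓖` has a Borel
small-coverable set `T 𝓖` containing every Borel small-coverable set modulo `𝓘`.

It suffices to find `𝓡` with `#𝓡 < 𝔠` and `T (𝓕 \ 𝓡) ∈ 𝓘`, and to take `𝓕₀ = 𝓕 \ 𝓡`: the envelope
of `⋃𝓕₀` is still `E`, since every positive Borel part of `E` meets `𝔠` members of `𝓕`. If there
were no such `𝓡`, let `𝓡ₖ₊₁` add to `𝓡ₖ` (with `𝓡₀ = ∅`) a small cover `𝓒ₖ ⊆ 𝓕 \ 𝓡ₖ` of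
`T (𝓕 \ 𝓡ₖ)`, and put `𝓡 = ⋃ₖ 𝓡ₖ`. Then `T (𝓕 \ 𝓡)` is positive and lies in every `T (𝓕 \ 𝓡ₖ)`
modulo `𝓘`, so some point lies in a member of every `𝓒ₖ`. These members are pairwise distinct,
contradicting point-finiteness.
-/

open Set Cardinal Function

universe u v

namespace Cardinal

theorem sum_lt_continuum {ι : Type v} [Countable ι] {κ : ι → Cardinal.{u}} (h : ∀ i, κ i < 𝔠) :
    sum κ < 𝔠 :=
  calc sum κ < prod fun _ : ι => 𝔠 := sum_lt_prod _ _ h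
    _ = 𝔠 ^ lift.{u} #ι := by rw [prod_const, lift_continuum]
    _ ≤ 𝔠 ^ ℵ₀ := power_le_power_left continuum_ne_zero (lift_le_aleph0.2 mk_le_aleph0)
    _ = 𝔠 := continuum_power_aleph0

theorem mk_iUnion_lt_continuum {α : Type u} {ι : Type v} [Countable ι] {s : ι → Set α}
    (h : ∀ i, #(s i) < 𝔠) : #(⋃ i, s i) < 𝔠 :=
  lift_lt_continuum.1 (mk_iUnion_le_sum_mk_lift.trans_lt (sum_lt_continuum h))

theorem mk_le_continuum_of_pointFinite {X : Type u} (hX : #X ≤ 𝔠) {𝓕 : Set (Set X)}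
    (hpf : ∀ x, {F | F ∈ 𝓕 ∧ x ∈ F}.Finite) : #𝓕 ≤ 𝔠 := by
  have hcover : 𝓕 ⊆ insert ∅ (⋃ x, {F | F ∈ 𝓕 ∧ x ∈ F}) := by
    intro F hF
    rcases F.eq_empty_or_nonempty with rfl | ⟨x, hx⟩
    · exact mem_insert _ _
    · exact mem_insert_of_mem _ (mem_iUnion.2 ⟨x, hF, hx⟩)
  calc #𝓕 ≤ #(⋃ x, {F | F ∈ 𝓕 ∧ x ∈ F}) + 1 := (mk_le_mk_of_subset hcover).trans mk_insert_le
    _ ≤ (sum fun _ : X => ℵ₀) + 1 := by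
      gcongr
      refine mk_iUnion_le_sum_mk.trans (sum_le_sum _ _ fun x => ?_)
      have := (hpf x).countable.to_subtype
      exact mk_le_aleph0
    _ = #X * ℵ₀ + 1 := by rw [sum_const']
    _ ≤ 𝔠 * ℵ₀ + 1 := by gcongr
    _ = 𝔠 := by rw [continuum_mul_aleph0, add_one_eq aleph0_le_continuum]

end Cardinal

theorem StandardBorelSpace.mk_le_continuum (X : Type u) [MeasurableSpace X]
    [StandardBorelSpace X] : #X ≤ 𝔠 := by
  obtain ⟨f, hf⟩ := MeasureTheory.exists_measurableEmbedding_real X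
  simpa [mk_real] using lift_mk_le_lift_mk_of_injective hf.injective

section SmallCoverable

variable {X : Type u}

def SmallCoverable (𝓖 : Set (Set X)) (B : Set X) : Prop :=
  ∃ 𝓓 ⊆ 𝓖, #𝓓 < 𝔠 ∧ B ⊆ ⋃₀ 𝓓

theorem SmallCoverable.mono {𝓖 𝓖' : Set (Set X)} {B : Set X} (h : SmallCoverable 𝓖 B)
    (h𝓖 : 𝓖 ⊆ 𝓖') : SmallCoverable 𝓖' B :=
  let ⟨𝓓, h𝓓, hcard, hcov⟩ := h
  ⟨𝓓, h𝓓.trans h𝓖, hcard, hcov⟩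

theorem SmallCoverable.subset {𝓖 : Set (Set X)} {A B : Set X} (h : SmallCoverable 𝓖 B)
    (hAB : A ⊆ B) : SmallCoverable 𝓖 A :=
  let ⟨𝓓, h𝓓, hcard, hcov⟩ := h
  ⟨𝓓, h𝓓, hcard, hAB.trans hcov⟩

theorem SmallCoverable.sUnion {𝓖 𝒜 : Set (Set X)} (h𝒜 : 𝒜.Countable)
    (h : ∀ A ∈ 𝒜, SmallCoverable 𝓖 A) : SmallCoverable 𝓖 (⋃₀ 𝒜) := by
  have := h𝒜.to_subtype
  choose 𝓓 h𝓓 hcard hcov using fun A : 𝒜 => h A A.2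
  exact ⟨⋃ A, 𝓓 A, iUnion_subset h𝓓, mk_iUnion_lt_continuum hcard,
    sUnion_subset fun A hA => (hcov ⟨A, hA⟩).trans (sUnion_mono (subset_iUnion 𝓓 ⟨A, hA⟩))⟩

theorem exists_notMem_sUnion_iterate {𝓕 : Set (Set X)} {z : X}
    (hz : {F | F ∈ 𝓕 ∧ z ∈ F}.Finite) (C : Set (Set X) → Set (Set X))
    (hC : ∀ 𝓡, C 𝓡 ⊆ 𝓕 \ 𝓡) : ∃ k, z ∉ ⋃₀ C ((fun 𝓡 => 𝓡 ∪ C 𝓡)^[k] ∅) := by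
  by_contra! h
  choose F hF hzF using h
  set S := fun k => (fun 𝓡 => 𝓡 ∪ C 𝓡)^[k] (∅ : Set (Set X))
  have hS : Monotone S := monotone_nat_of_le_succ fun k => by
    simp only [S, iterate_succ_apply']
    exact subset_union_left
  have hFS : ∀ k, F k ∈ S (k + 1) := fun k => by
    simp only [S, iterate_succ_apply']
    exact Or.inr (hF k)
  have hinj : Injective F := .of_lt_imp_ne fun j k hjk hjk' =>
    (hC _ (hF k)).2 (hjk' ▸ hS hjk (hFS j))
  exact hz.not_infinite (infinite_of_injective_forall_mem hinj fun k => ⟨(hC _ (hF k)).1, hzF k⟩)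

end SmallCoverable

section SigmaIdeal

variable {X : Type u} {𝓘 : Set (Set X)} (hDown : ∀ A B : Set X, A ⊆ B → B ∈ 𝓘 → A ∈ 𝓘)
  (hUnion : ∀ f : ℕ → Set X, (∀ n, f n ∈ 𝓘) → (⋃ n, f n) ∈ 𝓘)

include hDown hUnion in
theorem mem_of_diff_mem {A N : Set X} (hN : N ∈ 𝓘) (hAN : A \ N ∈ 𝓘) : A ∈ 𝓘 := by
  refine hDown _ (⋃ n : ℕ, if n = 0 then A \ N else N) (fun x hx => ?_)
    (hUnion _ fun n => by split_ifs <;> assumption)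
  by_cases hxN : x ∈ N
  · exact mem_iUnion.2 ⟨1, by simpa using hxN⟩
  · exact mem_iUnion.2 ⟨0, by simpa using ⟨hx, hxN⟩⟩

variable [MeasurableSpace X] (hccc : ∀ 𝒟 : Set (Set X), (∀ D ∈ 𝒟, MeasurableSet D ∧ D ∉ 𝓘) →
  𝒟.PairwiseDisjoint id → 𝒟.Countable)

include hccc in
theorem exists_countable_subfamily_meeting_all (hemp : ∅ ∈ 𝓘) {𝓢 : Set (Set X)}
    (h𝓢 : ∀ A ∈ 𝓢, MeasurableSet A ∧ A ∉ 𝓘) :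
    ∃ 𝒜 ⊆ 𝓢, 𝒜.Countable ∧ ∀ B ∈ 𝓢, ∃ A ∈ 𝒜, (B ∩ A).Nonempty := by
  obtain ⟨𝒜, ⟨h𝒜𝓢, h𝒜disj⟩, h𝒜max⟩ :=
    zorn_subset {𝒜 : Set (Set X) | 𝒜 ⊆ 𝓢 ∧ 𝒜.PairwiseDisjoint id} fun c hc hchain =>
      ⟨⋃₀ c, ⟨sUnion_subset fun 𝒜 h𝒜 => (hc h𝒜).1,
        (pairwiseDisjoint_sUnion hchain.directedOn).2 fun 𝒜 h𝒜 => (hc h𝒜).2⟩,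
        fun _ => subset_sUnion_of_mem⟩
  refine ⟨𝒜, h𝒜𝓢, hccc 𝒜 (fun D hD => h𝓢 D (h𝒜𝓢 hD)) h𝒜disj, fun B hB => ?_⟩
  by_contra! hdisj
  have hB𝒜 : B ∈ 𝒜 := h𝒜max ⟨insert_subset hB h𝒜𝓢, h𝒜disj.insert fun A hA _ =>
    disjoint_iff_inter_eq_empty.2 (hdisj A hA)⟩
    (subset_insert _ _) (mem_insert _ _)
  have hBempty : B = ∅ := by simpa using hdisj B hB𝒜
  exact (h𝓢 B hB).2 (hBempty ▸ hemp)

include hccc in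
theorem exists_greatest_smallCoverable_modulo (hemp : ∅ ∈ 𝓘) (𝓖 : Set (Set X)) :
    ∃ T, MeasurableSet T ∧ SmallCoverable 𝓖 T ∧
      ∀ B, MeasurableSet B → SmallCoverable 𝓖 B → B \ T ∈ 𝓘 := by
  obtain ⟨𝒜, h𝒜, h𝒜c, h𝒜meet⟩ := exists_countable_subfamily_meeting_all hccc hemp
    (𝓢 := {B | MeasurableSet B ∧ B ∉ 𝓘 ∧ SmallCoverable 𝓖 B}) fun A hA => ⟨hA.1, hA.2.1⟩
  refine ⟨⋃₀ 𝒜, .sUnion h𝒜c fun A hA => (h𝒜 hA).1, .sUnion h𝒜c fun A hA => (h𝒜 hA).2.2,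
    fun B hB hcov => ?_⟩
  by_contra hpos
  obtain ⟨A, hA, x, hxB, hxA⟩ := h𝒜meet (B \ ⋃₀ 𝒜)
    ⟨hB.diff (.sUnion h𝒜c fun A hA => (h𝒜 hA).1), hpos, hcov.subset sdiff_subset⟩
  exact hxB.2 ⟨A, hA, hxA⟩

include hDown hUnion hccc in
theorem exists_small_removal (hemp : ∅ ∈ 𝓘) {𝓕 : Set (Set X)}
    (hpf : ∀ x, {F | F ∈ 𝓕 ∧ x ∈ F}.Finite) :
    ∃ 𝓡 : Set (Set X), #𝓡 < 𝔠 ∧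
      ∀ B, MeasurableSet B → SmallCoverable (𝓕 \ 𝓡) B → B ∈ 𝓘 := by
  choose T hTm hTcov hTmax using fun 𝓡 : Set (Set X) =>
    exists_greatest_smallCoverable_modulo hccc hemp (𝓕 \ 𝓡)
  suffices ∃ 𝓡 : Set (Set X), #𝓡 < 𝔠 ∧ T 𝓡 ∈ 𝓘 by
    obtain ⟨𝓡, h𝓡, hT⟩ := this
    exact ⟨𝓡, h𝓡, fun B hB hcov => mem_of_diff_mem hDown hUnion hT (hTmax 𝓡 B hB hcov)⟩
  by_contra! hpos
  have hT_anti : ∀ {𝓡 𝓡'}, 𝓡 ⊆ 𝓡' → T 𝓡' \ T 𝓡 ∈ 𝓘 := fun h =>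
    hTmax _ _ (hTm _) ((hTcov _).mono (sdiff_subset_sdiff_right h))
  choose C hC hCcard hTC using hTcov
  set S := fun k => (fun 𝓡 => 𝓡 ∪ C 𝓡)^[k] (∅ : Set (Set X))
  have hS : ∀ k, #(S k) < 𝔠 := by
    intro k
    induction k with
    | zero => simpa [S] using continuum_pos
    | succ k ih =>
      simp only [S, iterate_succ_apply']
      exact (mk_union_le _ _).trans_lt (add_lt_of_lt aleph0_le_continuum ih (hCcard _))
  set 𝓡 := ⋃ k, S k
  obtain ⟨z, hz𝓡, hzS⟩ : (T 𝓡 \ ⋃ k, T 𝓡 \ T (S k)).Nonempty :=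
    nonempty_iff_ne_empty.2 fun h => hpos 𝓡 (mk_iUnion_lt_continuum hS) <|
      mem_of_diff_mem hDown hUnion (hUnion _ fun k => hT_anti (subset_iUnion S k)) (h ▸ hemp)
  obtain ⟨k, hk⟩ := exists_notMem_sUnion_iterate (hpf z) C fun 𝓡 => hC 𝓡
  by_cases hzk : z ∈ T (S k)
  · exact hk (hTC _ hzk)
  · exact hzS (mem_iUnion.2 ⟨k, hz𝓡, hzk⟩)

end SigmaIdeal

theorem stmt_13_general {X : Type} [TopologicalSpace X] [PolishSpace X]
    [MeasurableSpace X] [BorelSpace X]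
    (𝓘 : Set (Set X))
    (hDown : ∀ A B : Set X, A ⊆ B → B ∈ 𝓘 → A ∈ 𝓘)
    (hUnion : ∀ f : ℕ → Set X, (∀ n, f n ∈ 𝓘) → (⋃ n, f n) ∈ 𝓘)
    (hccc : ∀ 𝒟 : Set (Set X), (∀ D ∈ 𝒟, MeasurableSet D ∧ D ∉ 𝓘) →
      𝒟.PairwiseDisjoint id → 𝒟.Countable)
    (𝓕 : Set (Set X))
    (hpf : ∀ x : X, {F | F ∈ 𝓕 ∧ x ∈ F}.Finite)
    (E : Set X) (hEmeas : MeasurableSet E) (hEsub : ⋃₀ 𝓕 ⊆ E)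
    (h2 : ∀ B : Set X, MeasurableSet B → B ∉ 𝓘 → B ⊆ E →
      Cardinal.mk ↥{F | F ∈ 𝓕 ∧ (F ∩ B).Nonempty} = Cardinal.continuum) :
    ∃ 𝓕₀ ⊆ 𝓕,
      (∃ E₀ : Set X, MeasurableSet E₀ ∧ ⋃₀ 𝓕₀ ⊆ E₀ ∧
        (∀ C : Set X, MeasurableSet C → ⋃₀ 𝓕₀ ⊆ C → E₀ \ C ∈ 𝓘) ∧
        symmDiff E₀ E ∈ 𝓘) ∧
      (∀ B : Set X, MeasurableSet B → B ∉ 𝓘 → B ⊆ ⋃₀ 𝓕₀ →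
        ∀ 𝓐 ⊆ 𝓕₀, B ⊆ ⋃₀ 𝓐 → Cardinal.mk ↥𝓐 = Cardinal.continuum) := by
  have hemp : ∅ ∈ 𝓘 := by
    by_contra h
    exact continuum_ne_zero (by simpa [eq_comm] using h2 ∅ .empty h (empty_subset E))
  obtain ⟨𝓡, h𝓡, h𝓡null⟩ := exists_small_removal hDown hUnion hccc hemp hpf
  refine ⟨𝓕 \ 𝓡, sdiff_subset,
    ⟨E, hEmeas, (sUnion_mono sdiff_subset).trans hEsub, ?_, by simpa⟩, ?_⟩
  · intro C hC hcov
    by_contra hpos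
    have hmeet : {F | F ∈ 𝓕 ∧ (F ∩ (E \ C)).Nonempty} ⊆ 𝓡 := fun F ⟨hF, x, hxF, hxE, hxC⟩ =>
      by_contra fun hF𝓡 => hxC (hcov ⟨F, ⟨hF, hF𝓡⟩, hxF⟩)
    exact ((mk_le_mk_of_subset hmeet).trans_lt h𝓡).ne (h2 _ (hEmeas.diff hC) hpos sdiff_subset)
  · intro B hB hpos _ 𝓐 h𝓐 hcov
    refine le_antisymm ?_ (not_lt.1 fun hsmall => hpos (h𝓡null B hB ⟨𝓐, h𝓐, hsmall, hcov⟩))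
    exact (mk_le_mk_of_subset (h𝓐.trans sdiff_subset)).trans
      (mk_le_continuum_of_pointFinite (StandardBorelSpace.mk_le_continuum X) hpf)

theorem stmt_13 {X : Type} [TopologicalSpace X] [PolishSpace X] [Uncountable X]
    [MeasurableSpace X] [BorelSpace X]
    (𝓘 : Set (Set X))
    (hDown : ∀ A B : Set X, A ⊆ B → B ∈ 𝓘 → A ∈ 𝓘)
    (hUnion : ∀ f : ℕ → Set X, (∀ n, f n ∈ 𝓘) → (⋃ n, f n) ∈ 𝓘)
    (hProper : (univ : Set X) ∉ 𝓘)
    (hSing : ∀ x : X, ({x} : Set X) ∈ 𝓘)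
    (hBase : ∀ A ∈ 𝓘, ∃ B : Set X, A ⊆ B ∧ MeasurableSet B ∧ B ∈ 𝓘)
    (hccc : ∀ 𝒟 : Set (Set X), (∀ D ∈ 𝒟, MeasurableSet D ∧ D ∉ 𝓘) →
      𝒟.PairwiseDisjoint id → 𝒟.Countable)
    (𝓕 : Set (Set X)) (h𝓕 : 𝓕 ⊆ 𝓘)
    (hpf : ∀ x : X, {F | F ∈ 𝓕 ∧ x ∈ F}.Finite)
    (E : Set X) (hEmeas : MeasurableSet E) (hEsub : ⋃₀ 𝓕 ⊆ E)
    (hEmin : ∀ C : Set X, MeasurableSet C → ⋃₀ 𝓕 ⊆ C → E \ C ∈ 𝓘)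
    (h2 : ∀ B : Set X, MeasurableSet B → B ∉ 𝓘 → B ⊆ E →
      Cardinal.mk ↥{F | F ∈ 𝓕 ∧ (F ∩ B).Nonempty} = Cardinal.continuum) :
    ∃ 𝓕₀ ⊆ 𝓕,
      (∃ E₀ : Set X, MeasurableSet E₀ ∧ ⋃₀ 𝓕₀ ⊆ E₀ ∧
        (∀ C : Set X, MeasurableSet C → ⋃₀ 𝓕₀ ⊆ C → E₀ \ C ∈ 𝓘) ∧
        symmDiff E₀ E ∈ 𝓘) ∧
      (∀ B : Set X, MeasurableSet B → B ∉ 𝓘 → B ⊆ ⋃₀ 𝓕₀ →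
        ∀ 𝓐 ⊆ 𝓕₀, B ⊆ ⋃₀ 𝓐 → Cardinal.mk ↥𝓐 = Cardinal.continuum) :=
  stmt_13_general 𝓘 hDown hUnion hccc 𝓕 hpf E hEmeas hEsub h2
end
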